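/- Let d ≤ n and let P be a d×n integer matrix of rank d such that P^T ω ∉ 2ℤ^n for every ω ∈ {0,1}^d \ {0}. Let a^H : ℤ^n → ℂ be the n-dimensional Haar low-pass filter and, for each ordered pair (γ₁, γ₂) of distinct elements of {0,1}^n, let b_{γ₁,γ₂} := 2^{-n}(δ_{γ₁} − δ_{γ₂}). Then the projected filters form a d-dimensional tight framelet filter bank: for all γ ∈ {0,1}^d and all n' ∈ ℤ^d, Σ_{k∈ℤ^d} (Pa^H)(γ+2k)·conj((Pa^H)(n'+γ+2k)) + (1/2)·Σ_{(γ₁,γ₂): γ₁,γ₂∈{0,1}^n, γ₁≠γ₂} Σ_{k∈ℤ^d} (P b_{γ₁,γ₂})(γ+2k)·conj((P b_{γ₁,γ₂})(n'+γ+2k)) = 2^{-d}·δ(n'). -/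

import Mathlib

open scoped BigOperators

/-- The `n`-dimensional Haar low-pass filter: value `2^{-n}` on `{0,1}^n ⊆ ℤ^n`. -/
noncomputable def haarFilter (n : ℕ) : (Fin n → ℤ) → ℂ :=
  fun k => if ∀ i, k i = 0 ∨ k i = 1 then ((2 : ℂ) ^ n)⁻¹ else 0

/-- Embedding of `{0,1}^n` (modeled by `Fin n → Bool`) into `ℤ^n`. -/
def boolToInt {n : ℕ} (γ : Fin n → Bool) : Fin n → ℤ :=
  fun i => if γ i then 1 else 0

/-- The high-pass filter `2^{-n}(δ_{γ₁} - δ_{γ₂})`. -/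
noncomputable def haarHighPass (n : ℕ) (γ₁ γ₂ : Fin n → ℤ) : (Fin n → ℤ) → ℂ :=
  fun k => ((2 : ℂ) ^ n)⁻¹ * ((if k = γ₁ then 1 else 0) - (if k = γ₂ then 1 else 0))

/-- The projected filter `(Pa)(j) := Σ_{k ∈ ℤ^n, Pk = j} a(k)`. -/
noncomputable def projFilter {d n : ℕ} (P : Matrix (Fin d) (Fin n) ℤ)
    (a : (Fin n → ℤ) → ℂ) : (Fin d → ℤ) → ℂ :=
  fun j => ∑ᶠ (k : Fin n → ℤ) (_ : P.mulVec k = j), a k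

/-!
The projected filters are combinations of Dirac masses: `Pa^H = 2^{-n} ∑_g δ_{Pg}` and
`P b_{g,h} = 2^{-n} (δ_{Pg} - δ_{Ph})`, with `g, h ∈ {0,1}^n`. The polyphase sum
`B(u, v) = ∑_k u(γ + 2k) conj (v(n' + γ + 2k))` is biadditive, so the Lagrange identity
`B(∑ e, ∑ e) + ½ ∑_{g,h} B(e_g - e_h, e_g - e_h) = 2^n ∑_g B(e_g, e_g)` collapses the left side to
`2^{-n} δ(n') · #{g : Pg ≡ γ mod 2}`. The hypothesis on `Pᵀ` says that `P mod 2 : 𝔽₂^n → 𝔽₂^d`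
has injective transpose, hence is surjective, so every residue class `γ` has `2^{n-d}` preimages.
-/

open Finset Function Matrix

theorem AddMonoidHom.two_nsmul_apply_sum_add_sum_sum_apply_sub_sub {α M N : Type*} [Fintype α]
    [AddCommGroup M] [AddCommGroup N] (B : M →+ M →+ N) (e : α → M) :
    2 • B (∑ g, e g) (∑ g, e g) + ∑ g, ∑ h, B (e g - e h) (e g - e h) =
      (2 * Fintype.card α) • ∑ g, B (e g) (e g) := by
  simp only [map_sub, AddMonoidHom.sub_apply, map_sum, AddMonoidHom.finsetSum_apply,
    Finset.sum_sub_distrib, Finset.sum_const, Finset.card_univ]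
  rw [Finset.sum_comm (f := fun g h => B (e h) (e g)), ← Finset.smul_sum, mul_nsmul']
  abel

theorem AddMonoidHom.apply_sum_add_half_sum_sum_apply_sub_sub {α M K : Type*} [Fintype α]
    [AddCommGroup M] [Field K] [CharZero K] (B : M →+ M →+ K) (e : α → M) :
    B (∑ g, e g) (∑ g, e g) + 1 / 2 * ∑ g, ∑ h, B (e g - e h) (e g - e h) =
      Fintype.card α * ∑ g, B (e g) (e g) := by
  have h := B.two_nsmul_apply_sum_add_sum_sum_apply_sub_sub e
  simp only [nsmul_eq_mul, Nat.cast_mul, Nat.cast_ofNat] at h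
  field_simp
  linear_combination h

section Polyphase

variable {d : ℕ}

lemma injective_two_mul_add (γ : Fin d → ℤ) :
    Injective fun k : Fin d → ℤ => fun i => γ i + 2 * k i := by
  intro k k' h
  funext i
  have := congrFun h i
  simp only at this
  omega

lemma hasFiniteSupport_finsupp_comp_mul (u : (Fin d → ℤ) →₀ ℂ) (γ : Fin d → ℤ)
    (f : (Fin d → ℤ) → ℂ) :
    HasFiniteSupport fun k : Fin d → ℤ => u (fun i => γ i + 2 * k i) * f k :=
  (u.hasFiniteSupport.preimage (injective_two_mul_add γ).injOn).subset
    fun _ hk => left_ne_zero_of_mul hk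

lemma hasFiniteSupport_mul_conj_finsupp_comp (u : (Fin d → ℤ) →₀ ℂ) (γ : Fin d → ℤ)
    (f : (Fin d → ℤ) → ℂ) :
    HasFiniteSupport fun k : Fin d → ℤ => f k * starRingEnd ℂ (u (fun i => γ i + 2 * k i)) :=
  (u.hasFiniteSupport.preimage (injective_two_mul_add γ).injOn).subset
    fun _ hk => by simpa using right_ne_zero_of_mul hk

/-- Restricted to finitely supported filters, where the sum is finite and hence biadditive. -/
noncomputable def polyphaseCorr (γ n' : Fin d → ℤ) :
    ((Fin d → ℤ) →₀ ℂ) →+ ((Fin d → ℤ) →₀ ℂ) →+ ℂ :=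
  AddMonoidHom.mk' (fun u => AddMonoidHom.mk' (fun v => ∑ᶠ k : Fin d → ℤ,
      u (fun i => γ i + 2 * k i) * starRingEnd ℂ (v (fun i => n' i + γ i + 2 * k i)))
    fun v w => by
      simp only [Finsupp.coe_add, Pi.add_apply, map_add, mul_add]
      exact finsum_add_distrib (hasFiniteSupport_finsupp_comp_mul u γ _)
        (hasFiniteSupport_finsupp_comp_mul u γ _))
    fun u u' => AddMonoidHom.ext fun v => by
      simp only [AddMonoidHom.mk'_apply, Finsupp.coe_add, Pi.add_apply, add_mul]
      exact finsum_add_distrib (hasFiniteSupport_mul_conj_finsupp_comp v _ _)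
        (hasFiniteSupport_mul_conj_finsupp_comp v _ _)

lemma polyphaseCorr_apply (γ n' : Fin d → ℤ) (u v : (Fin d → ℤ) →₀ ℂ) :
    polyphaseCorr γ n' u v = ∑ᶠ k : Fin d → ℤ,
      u (fun i => γ i + 2 * k i) * starRingEnd ℂ (v (fun i => n' i + γ i + 2 * k i)) :=
  rfl

lemma polyphaseCorr_single_self (γ n' x : Fin d → ℤ) (a : ℂ) :
    polyphaseCorr γ n' (Finsupp.single x a) (Finsupp.single x a) =
      if n' = 0 ∧ ∀ i, 2 ∣ x i - γ i then a * starRingEnd ℂ a else 0 := by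
  rw [polyphaseCorr_apply]
  split_ifs with h
  · obtain ⟨rfl, hx⟩ := h
    choose k₀ hk₀ using hx
    have hx : (fun i => γ i + 2 * k₀ i) = x := funext fun i => by linarith [hk₀ i]
    rw [finsum_eq_single _ k₀ fun k hk => ?_]
    · simp [hx]
    · rw [Finsupp.single_eq_of_ne, zero_mul]
      rw [← hx]
      exact (injective_two_mul_add γ).ne hk
  · refine finsum_eq_zero_of_forall_eq_zero fun k => ?_
    by_cases h₁ : x = fun i => γ i + 2 * k i
    · by_cases h₂ : x = fun i => n' i + γ i + 2 * k i
      · refine absurd ⟨funext fun i => ?_, fun i => ⟨k i, ?_⟩⟩ h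
        · have h₁i : x i = γ i + 2 * k i := congrFun h₁ i
          have h₂i : x i = n' i + γ i + 2 * k i := congrFun h₂ i
          simp only [Pi.zero_apply]
          omega
        · have h₁i : x i = γ i + 2 * k i := congrFun h₁ i
          omega
      · simp [Finsupp.single_apply, h₂]
    · simp [Finsupp.single_apply, h₁]

lemma sum_polyphaseCorr_single_self {α : Type*} [Fintype α] (γ n' : Fin d → ℤ)
    (x : α → Fin d → ℤ) (a : ℂ) :
    ∑ g, polyphaseCorr γ n' (Finsupp.single (x g) a) (Finsupp.single (x g) a) =
      (if n' = 0 then (#{g | ∀ i, 2 ∣ x g i - γ i} : ℂ) else 0) * (a * starRingEnd ℂ a) := by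
  simp only [polyphaseCorr_single_self]
  split_ifs with hn'
  · simp only [hn', true_and, ← Finset.sum_filter, sum_const, nsmul_eq_mul]
  · simp [hn']

end Polyphase

lemma projFilter_eq_mapDomain {d n : ℕ} (P : Matrix (Fin d) (Fin n) ℤ)
    (a : (Fin n → ℤ) →₀ ℂ) :
    projFilter P a = ⇑(a.mapDomain P.mulVec) := by
  classical
  funext j
  simp only [projFilter, finsum_eq_if]
  rw [finsum_eq_finsetSum_of_support_subset (s := a.support) _ fun k hk => ?_]
  · simp [Finsupp.mapDomain, Finsupp.single_apply, Finsupp.sum]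
  · by_contra hk'
    simp [Finsupp.notMem_support_iff.mp hk'] at hk

lemma boolToInt_injective {n : ℕ} : Injective (boolToInt (n := n)) := by
  intro g h hgh
  funext i
  have := congrFun hgh i
  cases hg : g i <;> cases hh : h i <;> simp_all [boolToInt]

lemma range_boolToInt {n : ℕ} :
    Set.range (boolToInt (n := n)) = {k | ∀ i, k i = 0 ∨ k i = 1} := by
  ext k
  refine ⟨?_, fun hk => ⟨fun i => k i = 1, funext fun i => ?_⟩⟩
  · rintro ⟨g, rfl⟩ i
    cases g i <;> simp [boolToInt]
  · rcases hk i with h | h <;> simp [boolToInt, h]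

lemma haarFilter_eq_sum_single (n : ℕ) :
    haarFilter n = ⇑(∑ g : Fin n → Bool, Finsupp.single (boolToInt g) ((2 : ℂ) ^ n)⁻¹) := by
  classical
  funext k
  simp only [haarFilter, Finsupp.coe_finsetSum, Finset.sum_apply, Finsupp.single_apply]
  split_ifs with hk
  · obtain ⟨g₀, rfl⟩ : k ∈ Set.range boolToInt := range_boolToInt.superset hk
    simp [boolToInt_injective.eq_iff]
  · refine (Finset.sum_eq_zero fun g _ => if_neg ?_).symm
    rintro rfl
    exact hk (range_boolToInt.subset ⟨g, rfl⟩)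

lemma haarHighPass_eq_sub_single (n : ℕ) (x y : Fin n → ℤ) :
    haarHighPass n x y =
      ⇑(Finsupp.single x ((2 : ℂ) ^ n)⁻¹ - Finsupp.single y ((2 : ℂ) ^ n)⁻¹) := by
  classical
  funext k
  simp [haarHighPass, Finsupp.single_apply, mul_sub, eq_comm]

lemma projFilter_haarFilter {d n : ℕ} (P : Matrix (Fin d) (Fin n) ℤ) :
    projFilter P (haarFilter n) =
      ⇑(∑ g : Fin n → Bool, Finsupp.single (P *ᵥ boolToInt g) ((2 : ℂ) ^ n)⁻¹) := by
  rw [haarFilter_eq_sum_single, projFilter_eq_mapDomain, Finsupp.mapDomain_finsetSum]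
  simp only [Finsupp.mapDomain_single]

lemma projFilter_haarHighPass {d n : ℕ} (P : Matrix (Fin d) (Fin n) ℤ) (x y : Fin n → ℤ) :
    projFilter P (haarHighPass n x y) =
      ⇑(Finsupp.single (P *ᵥ x) ((2 : ℂ) ^ n)⁻¹ - Finsupp.single (P *ᵥ y) ((2 : ℂ) ^ n)⁻¹) := by
  rw [haarHighPass_eq_sub_single, projFilter_eq_mapDomain, Finsupp.mapDomain_sub,
    Finsupp.mapDomain_single, Finsupp.mapDomain_single]

lemma AddMonoidHom.card_fiber_mul_card_of_surjective {G M : Type*} [AddGroup G] [Fintype G]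
    [AddGroup M] [Fintype M] [DecidableEq M] (f : G →+ M) (hf : Surjective f) (y : M) :
    #{g | f g = y} * Fintype.card M = Fintype.card G := by
  calc #{g | f g = y} * Fintype.card M = ∑ y' : M, #{g | f g = y'} := by
        rw [Finset.sum_congr rfl fun y' _ => AddMonoidHom.card_fiber_eq_of_mem_range f (hf y') (hf y)]
        simp [mul_comm]
    _ = Fintype.card G := (card_eq_sum_card_fiberwise fun g _ => mem_univ (f g)).symm

lemma Matrix.mulVec_surjective_of_vecMul_injective {m n K : Type*} [Field K] [Fintype m]
    [Fintype n] {A : Matrix m n K} (h : Injective A.vecMul) : Surjective A.mulVec := by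
  have hrank : A.rank = Fintype.card m := (vecMul_injective_iff.mp h).rank_matrix
  refine LinearMap.range_eq_top.mp
    (Submodule.eq_top_of_finrank_eq (S := LinearMap.range A.mulVecLin) ?_)
  rw [← Matrix.rank, hrank, Module.finrank_fintype_fun_eq_card]

lemma vecMul_map_intCast_zmod_two_injective {d n : ℕ} (P : Matrix (Fin d) (Fin n) ℤ)
    (hP : ∀ ω : Fin d → ℤ, (∀ i, ω i = 0 ∨ ω i = 1) → ω ≠ 0 →
      ¬ ∀ j, (2 : ℤ) ∣ P.transpose.mulVec ω j) :
    Injective (P.map (Int.castRingHom (ZMod 2))).vecMul := by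
  refine (injective_iff_map_eq_zero (vecMulLinear (P.map (Int.castRingHom (ZMod 2))))).mpr
    fun w hw => ?_
  by_contra hw0
  let ω : Fin d → ℤ := fun i => (w i).val
  have hω : Int.castRingHom (ZMod 2) ∘ ω = w := funext fun i => by simp [ω]
  refine hP ω (fun i => ?_) (fun h => hw0 ?_) fun j => ?_
  · have := (w i).val_lt
    change ((w i).val : ℤ) = 0 ∨ ((w i).val : ℤ) = 1
    omega
  · rw [← hω, h]
    rfl
  · refine (ZMod.intCast_zmod_eq_zero_iff_dvd _ 2).mp ?_
    have h := (Int.castRingHom (ZMod 2)).map_vecMul P ω j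
    rw [hω] at h
    rw [mulVec_transpose, ← eq_intCast (Int.castRingHom (ZMod 2)), h]
    exact congrFun hw j

def boolEquivZModTwo : Bool ≃ ZMod 2 where
  toFun b := if b then 1 else 0
  invFun x := x = 1
  left_inv := by decide
  right_inv := by decide

lemma card_filter_two_dvd_mulVec_boolToInt_sub_mul {d n : ℕ} (P : Matrix (Fin d) (Fin n) ℤ)
    (hP : Surjective (P.map (Int.castRingHom (ZMod 2))).mulVec) (γ : Fin d → ℤ) :
    #{g : Fin n → Bool | ∀ i, 2 ∣ (P *ᵥ boolToInt g) i - γ i} * 2 ^ d = 2 ^ n := by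
  classical
  let e : (Fin n → Bool) ≃ (Fin n → ZMod 2) := Equiv.piCongrRight fun _ => boolEquivZModTwo
  have he : ∀ g, Int.castRingHom (ZMod 2) ∘ boolToInt g = e g := fun g => funext fun i => by
    cases g i <;> simp [e, boolToInt, boolEquivZModTwo]
  have hcard := (P.map (Int.castRingHom (ZMod 2))).mulVecLin.toAddMonoidHom
    |>.card_fiber_mul_card_of_surjective hP (Int.castRingHom (ZMod 2) ∘ γ)
  simp only [Fintype.card_fun, ZMod.card, Fintype.card_fin] at hcard
  rw [← hcard, Finset.card_equiv e fun g => ?_]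
  simp only [mem_filter, mem_univ, true_and, LinearMap.toAddMonoidHom_coe, mulVecLin_apply,
    ← he, funext_iff]
  refine forall_congr' fun i => ?_
  rw [← RingHom.map_mulVec, Function.comp_apply, eq_intCast, eq_intCast,
    ZMod.intCast_eq_intCast_iff_dvd_sub, Nat.cast_ofNat, ← dvd_neg, neg_sub]

theorem projected_haar_tffb_general (d n : ℕ) (P : Matrix (Fin d) (Fin n) ℤ)
    (hP : ∀ ω : Fin d → ℤ, (∀ i, ω i = 0 ∨ ω i = 1) → ω ≠ 0 →
      ¬ ∀ j, (2 : ℤ) ∣ P.transpose.mulVec ω j)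
    (γ : Fin d → ℤ) (n' : Fin d → ℤ) :
    (∑ᶠ k : Fin d → ℤ,
        projFilter P (haarFilter n) (fun i => γ i + 2 * k i) *
          (starRingEnd ℂ) (projFilter P (haarFilter n) (fun i => n' i + γ i + 2 * k i))) +
      (1 / 2 : ℂ) *
        ∑ γ₁ : Fin n → Bool, ∑ γ₂ : Fin n → Bool,
          (if γ₁ ≠ γ₂ then
            ∑ᶠ k : Fin d → ℤ,
              projFilter P (haarHighPass n (boolToInt γ₁) (boolToInt γ₂))
                  (fun i => γ i + 2 * k i) *
                (starRingEnd ℂ)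
                  (projFilter P (haarHighPass n (boolToInt γ₁) (boolToInt γ₂))
                    (fun i => n' i + γ i + 2 * k i))
          else 0) =
      ((2 : ℂ) ^ d)⁻¹ * (if n' = 0 then 1 else 0) := by
  simp only [projFilter_haarFilter, projFilter_haarHighPass, ← polyphaseCorr_apply]
  set e : (Fin n → Bool) → (Fin d → ℤ) →₀ ℂ :=
    fun g => Finsupp.single (P *ᵥ boolToInt g) ((2 : ℂ) ^ n)⁻¹
  have hdiagonal_zero : ∀ g₁ g₂, (if g₁ ≠ g₂ then polyphaseCorr γ n' (e g₁ - e g₂) (e g₁ - e g₂) else 0) =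
      polyphaseCorr γ n' (e g₁ - e g₂) (e g₁ - e g₂) := fun g₁ g₂ =>
    ite_eq_left_iff.mpr fun h => by simp [not_not.mp h]
  have hcount : (#{g : Fin n → Bool | ∀ i, 2 ∣ (P *ᵥ boolToInt g) i - γ i} : ℂ) * 2 ^ d = 2 ^ n :=
    mod_cast card_filter_two_dvd_mulVec_boolToInt_sub_mul P
      (mulVec_surjective_of_vecMul_injective (vecMul_map_intCast_zmod_two_injective P hP)) γ
  have hconj : starRingEnd ℂ ((2 : ℂ) ^ n)⁻¹ = ((2 : ℂ) ^ n)⁻¹ := by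
    rw [map_inv₀, map_pow, map_ofNat]
  rw [Finset.sum_congr rfl fun g₁ _ => Finset.sum_congr rfl fun g₂ _ => hdiagonal_zero g₁ g₂,
    AddMonoidHom.apply_sum_add_half_sum_sum_apply_sub_sub, sum_polyphaseCorr_single_self, hconj]
  split_ifs
  · simp only [Fintype.card_fun, Fintype.card_bool, Fintype.card_fin, Nat.cast_pow,
      Nat.cast_ofNat]
    field_simp
    linear_combination hcount
  · simp

/-- Projecting the `n`-dimensional directional Haar tight framelet filter bank by a
`d × n` integer matrix `P` of rank `d` with `Pᵀω ∉ 2ℤ^n` for all `ω ∈ {0,1}^d \ {0}`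
gives a `d`-dimensional tight framelet filter bank (ordered pairs counted with a factor
`1/2`). -/
theorem projected_haar_tffb (d n : ℕ) (hdn : d ≤ n) (P : Matrix (Fin d) (Fin n) ℤ)
    (hrank : P.rank = d)
    (hP : ∀ ω : Fin d → ℤ, (∀ i, ω i = 0 ∨ ω i = 1) → ω ≠ 0 →
      ¬ ∀ j, (2 : ℤ) ∣ P.transpose.mulVec ω j)
    (γ : Fin d → ℤ) (hγ : ∀ i, γ i = 0 ∨ γ i = 1) (n' : Fin d → ℤ) :
    (∑ᶠ k : Fin d → ℤ,
        projFilter P (haarFilter n) (fun i => γ i + 2 * k i) *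
          (starRingEnd ℂ) (projFilter P (haarFilter n) (fun i => n' i + γ i + 2 * k i))) +
      (1 / 2 : ℂ) *
        ∑ γ₁ : Fin n → Bool, ∑ γ₂ : Fin n → Bool,
          (if γ₁ ≠ γ₂ then
            ∑ᶠ k : Fin d → ℤ,
              projFilter P (haarHighPass n (boolToInt γ₁) (boolToInt γ₂))
                  (fun i => γ i + 2 * k i) *
                (starRingEnd ℂ)
                  (projFilter P (haarHighPass n (boolToInt γ₁) (boolToInt γ₂))
                    (fun i => n' i + γ i + 2 * k i))
          else 0) =
      ((2 : ℂ) ^ d)⁻¹ * (if n' = 0 then 1 else 0) :=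
  projected_haar_tffb_general d n P hP γ n'
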